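/- arXiv:2205.13266 — 4 statements merged into one kernel-verified Lean document; each statement's English description precedes it below -/
import Mathlib

section
/- Under the value-iteration error recursion with Q_0 = r, |Q_*| ≤ Q̄, and deviation bounds from the one-step sandwich, the n-th deviation satisfies −γ^{n+1}·Q̄ + Σ_{m=0}^{n−1} γ^{n−m}·e̲_m ≤ δQ_n(s,a) ≤ γ^{n+1}·Q̄ + Σ_{m=0}^{n−1} γ^{n−m}·ē_m for all (s,a) and n ≥ 1, where e̲_m = min_s e_m(s) and ē_m = max_s e_m(s). -/
open Finset

theorem deviation_bounds
    {S A : Type*} [Fintype S] [Nonempty S] [Fintype A] [Nonempty A]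
    (γ : ℝ) (hγ0 : 0 ≤ γ) (hγ1 : γ < 1)
    (p : S → A → S → ℝ)
    (hp0 : ∀ s a s', 0 ≤ p s a s') (hp1 : ∀ s a, ∑ s' : S, p s a s' = 1)
    (r : S → A → ℝ) (e : ℕ → S → ℝ) (Q : ℕ → S → A → ℝ) (Qstar : S → A → ℝ)
    (Qbar : ℝ)
    (hstar : ∀ s a, Qstar s a =
      r s a + γ * ∑ s' : S, p s a s' *
        Finset.univ.sup' Finset.univ_nonempty (fun a' => Qstar s' a'))
    (hbar : ∀ s a, |Qstar s a| ≤ Qbar)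
    (hQ0 : ∀ s a, Q 0 s a = r s a)
    (hrec : ∀ n s a, Q (n + 1) s a =
      r s a + γ * ∑ s' : S, p s a s' *
        (Finset.univ.sup' Finset.univ_nonempty (fun a' => Q n s' a') + e n s')) :
    ∀ n, 1 ≤ n → ∀ s a,
      -γ ^ (n + 1) * Qbar +
          ∑ m ∈ Finset.range n,
            γ ^ (n - m) * Finset.univ.inf' Finset.univ_nonempty (e m) ≤
        Q n s a - Qstar s a ∧
      Q n s a - Qstar s a ≤
        γ ^ (n + 1) * Qbar +
          ∑ m ∈ Finset.range n,
            γ ^ (n - m) * Finset.univ.sup' Finset.univ_nonempty (e m) := by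
  -- generic sum bounds
  have sum_le : ∀ (s : S) (a : A) (g : S → ℝ) (c : ℝ), (∀ s', g s' ≤ c) →
      ∑ s' : S, p s a s' * g s' ≤ c := by
    intro s a g c hg
    calc ∑ s' : S, p s a s' * g s' ≤ ∑ s' : S, p s a s' * c :=
          Finset.sum_le_sum fun s' _ => mul_le_mul_of_nonneg_left (hg s') (hp0 s a s')
      _ = c := by rw [← Finset.sum_mul, hp1 s a, one_mul]
  have le_sum : ∀ (s : S) (a : A) (g : S → ℝ) (c : ℝ), (∀ s', c ≤ g s') →
      c ≤ ∑ s' : S, p s a s' * g s' := by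
    intro s a g c hg
    calc c = ∑ s' : S, p s a s' * c := by rw [← Finset.sum_mul, hp1 s a, one_mul]
      _ ≤ ∑ s' : S, p s a s' * g s' :=
          Finset.sum_le_sum fun s' _ => mul_le_mul_of_nonneg_left (hg s') (hp0 s a s')
  have key : ∀ n (s : S) (a : A),
      -γ ^ (n + 1) * Qbar +
          ∑ m ∈ Finset.range n,
            γ ^ (n - m) * Finset.univ.inf' Finset.univ_nonempty (e m) ≤
        Q n s a - Qstar s a ∧
      Q n s a - Qstar s a ≤
        γ ^ (n + 1) * Qbar +
          ∑ m ∈ Finset.range n,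
            γ ^ (n - m) * Finset.univ.sup' Finset.univ_nonempty (e m) := by
    intro n
    induction n with
    | zero =>
      intro s a
      simp only [Finset.range_zero, Finset.sum_empty, add_zero, pow_one]
      have hB : ∀ s' : S, |Finset.univ.sup' Finset.univ_nonempty (fun a' => Qstar s' a')| ≤ Qbar := by
        intro s'
        rw [abs_le]
        refine ⟨?_, Finset.sup'_le _ _ fun a' _ => (abs_le.1 (hbar s' a')).2⟩
        obtain ⟨a'⟩ := (inferInstance : Nonempty A)
        exact le_trans (abs_le.1 (hbar s' a')).1 (Finset.le_sup' _ (Finset.mem_univ a'))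
      have hδ : Q 0 s a - Qstar s a =
          -(γ * ∑ s' : S, p s a s' * Finset.univ.sup' Finset.univ_nonempty (fun a' => Qstar s' a')) := by
        rw [hQ0, hstar]; ring
      have h1 : ∑ s' : S, p s a s' * Finset.univ.sup' Finset.univ_nonempty (fun a' => Qstar s' a') ≤ Qbar :=
        sum_le s a _ _ fun s' => (abs_le.1 (hB s')).2
      have h2 : -Qbar ≤ ∑ s' : S, p s a s' * Finset.univ.sup' Finset.univ_nonempty (fun a' => Qstar s' a') :=
        le_sum s a _ _ fun s' => (abs_le.1 (hB s')).1
      have h1' := mul_le_mul_of_nonneg_left h1 hγ0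
      have h2' := mul_le_mul_of_nonneg_left h2 hγ0
      constructor
      · rw [hδ, show (0:ℕ) + 1 = 1 from rfl, pow_one]; nlinarith
      · rw [hδ, show (0:ℕ) + 1 = 1 from rfl, pow_one]; nlinarith
    | succ n ih =>
      intro s a
      have hδ : Q (n + 1) s a - Qstar s a =
          γ * ∑ s' : S, p s a s' *
            ((Finset.univ.sup' Finset.univ_nonempty (fun a' => Q n s' a') + e n s')
              - Finset.univ.sup' Finset.univ_nonempty (fun a' => Qstar s' a')) := by
        rw [hrec, hstar]
        simp only [mul_sub, Finset.sum_sub_distrib]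
        ring
      set Ln := -γ ^ (n + 1) * Qbar +
          ∑ m ∈ Finset.range n, γ ^ (n - m) * Finset.univ.inf' Finset.univ_nonempty (e m) with hLn
      set Un := γ ^ (n + 1) * Qbar +
          ∑ m ∈ Finset.range n, γ ^ (n - m) * Finset.univ.sup' Finset.univ_nonempty (e m) with hUn
      -- pointwise bounds on the summand
      have hup : ∀ s' : S,
          (Finset.univ.sup' Finset.univ_nonempty (fun a' => Q n s' a') + e n s')
              - Finset.univ.sup' Finset.univ_nonempty (fun a' => Qstar s' a')
            ≤ Un + Finset.univ.sup' Finset.univ_nonempty (e n) := by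
        intro s'
        have h1 : Finset.univ.sup' Finset.univ_nonempty (fun a' => Q n s' a')
            ≤ Finset.univ.sup' Finset.univ_nonempty (fun a' => Qstar s' a') + Un := by
          apply Finset.sup'_le
          intro a' _
          have := (ih s' a').2
          have h2 : Qstar s' a' ≤ Finset.univ.sup' Finset.univ_nonempty (fun a' => Qstar s' a') :=
            Finset.le_sup' _ (Finset.mem_univ a')
          linarith
        have h3 : e n s' ≤ Finset.univ.sup' Finset.univ_nonempty (e n) :=
          Finset.le_sup' _ (Finset.mem_univ s')
        linarith
      have hlo : ∀ s' : S,
          Ln + Finset.univ.inf' Finset.univ_nonempty (e n) ≤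
            (Finset.univ.sup' Finset.univ_nonempty (fun a' => Q n s' a') + e n s')
              - Finset.univ.sup' Finset.univ_nonempty (fun a' => Qstar s' a') := by
        intro s'
        have h1 : Finset.univ.sup' Finset.univ_nonempty (fun a' => Qstar s' a')
            ≤ Finset.univ.sup' Finset.univ_nonempty (fun a' => Q n s' a') - Ln := by
          apply Finset.sup'_le
          intro a' _
          have := (ih s' a').1
          have h2 : Q n s' a' ≤ Finset.univ.sup' Finset.univ_nonempty (fun a' => Q n s' a') :=
            Finset.le_sup' _ (Finset.mem_univ a')
          linarith
        have h3 : Finset.univ.inf' Finset.univ_nonempty (e n) ≤ e n s' :=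
          Finset.inf'_le _ (Finset.mem_univ s')
        linarith
      have hsum : ∀ f : ℕ → ℝ,
          ∑ m ∈ Finset.range (n + 1), γ ^ (n + 1 - m) * f m
            = γ * ((∑ m ∈ Finset.range n, γ ^ (n - m) * f m) + f n) := by
        intro f
        rw [Finset.sum_range_succ, mul_add, Finset.mul_sum]
        congr 1
        · refine Finset.sum_congr rfl fun m hm => ?_
          rw [Finset.mem_range] at hm
          rw [show n + 1 - m = (n - m) + 1 from by omega, pow_succ]
          ring
        · rw [show n + 1 - n = 1 from by omega, pow_one]
      have hub := mul_le_mul_of_nonneg_left (sum_le s a _ _ hup) hγ0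
      have hlb := mul_le_mul_of_nonneg_left (le_sum s a _ _ hlo) hγ0
      constructor
      · rw [hδ, hsum (fun m => Finset.univ.inf' Finset.univ_nonempty (e m))]
        have heq : γ * (Ln + Finset.univ.inf' Finset.univ_nonempty (e n))
            = -γ ^ (n + 1 + 1) * Qbar +
              γ * ((∑ m ∈ Finset.range n, γ ^ (n - m) * Finset.univ.inf' Finset.univ_nonempty (e m))
                + Finset.univ.inf' Finset.univ_nonempty (e n)) := by
          rw [hLn]; ring
        linarith
      · rw [hδ, hsum (fun m => Finset.univ.sup' Finset.univ_nonempty (e m))]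
        have heq : γ * (Un + Finset.univ.sup' Finset.univ_nonempty (e n))
            = γ ^ (n + 1 + 1) * Qbar +
              γ * ((∑ m ∈ Finset.range n, γ ^ (n - m) * Finset.univ.sup' Finset.univ_nonempty (e m))
                + Finset.univ.sup' Finset.univ_nonempty (e n)) := by
          rw [hUn]; ring
        linarith
  intro n _ s a
  exact key n s a
end

section
/- If the error terms e_n(s) → 0 uniformly over the finite state set S as n → ∞ (and are bounded), then in the value-iteration error recursion the deviations δQ_n(s,a) = Q_n(s,a) − Q_*(s,a) converge to 0 for every (s,a). -/
open Finset Filter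

lemma abs_sup'_sub_sup'_le_aux {ι : Type*} (t : Finset ι) (ht : t.Nonempty)
    (f g : ι → ℝ) (d : ℝ) (h : ∀ x ∈ t, |f x - g x| ≤ d) :
    |t.sup' ht f - t.sup' ht g| ≤ d := by
  rw [abs_le]
  constructor
  · rw [neg_le, neg_sub, sub_le_iff_le_add]
    apply Finset.sup'_le
    intro x hx
    have := abs_le.mp (h x hx)
    have := Finset.le_sup' f hx
    linarith
  · rw [sub_le_iff_le_add]
    apply Finset.sup'_le
    intro x hx
    have := abs_le.mp (h x hx)
    have := Finset.le_sup' g hx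
    linarith

lemma tendsto_of_rec_le {γ : ℝ} (hγ0 : 0 ≤ γ) (hγ1 : γ < 1)
    (d c : ℕ → ℝ) (hd0 : ∀ n, 0 ≤ d n)
    (hrec : ∀ n, d (n + 1) ≤ γ * d n + c n)
    (hc : Tendsto c atTop (nhds 0)) :
    Tendsto d atTop (nhds 0) := by
  rw [Metric.tendsto_atTop]
  intro ε hε
  have h1γ : 0 < 1 - γ := by linarith
  have hε' : 0 < ε * (1 - γ) / 2 := by positivity
  obtain ⟨N, hN⟩ := (Metric.tendsto_atTop.mp hc) (ε * (1 - γ) / 2) hε'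
  have hcN : ∀ n ≥ N, c n ≤ ε * (1 - γ) / 2 := by
    intro n hn
    have := hN n hn
    rw [Real.dist_eq, sub_zero] at this
    exact (abs_le.mp this.le).2
  -- d (N + m) ≤ γ^m * d N + ε/2
  have key : ∀ m, d (N + m) ≤ γ ^ m * d N + ε / 2 := by
    intro m
    induction m with
    | zero => simp; linarith [hε.le]
    | succ m ih =>
      have h1 := hrec (N + m)
      have h2 := hcN (N + m) (Nat.le_add_right N m)
      have h3 : γ * d (N + m) ≤ γ * (γ ^ m * d N + ε / 2) :=
        mul_le_mul_of_nonneg_left ih hγ0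
      have : d (N + m + 1) ≤ γ ^ (m + 1) * d N + (γ * ε / 2 + ε * (1 - γ) / 2) := by
        rw [pow_succ]; nlinarith
      have heq : γ * ε / 2 + ε * (1 - γ) / 2 = ε / 2 := by ring
      rw [heq] at this
      calc d (N + (m + 1)) = d (N + m + 1) := by ring_nf
        _ ≤ _ := this
  -- pick M with γ^M * d N ≤ ε/2
  have hpow : Tendsto (fun m => γ ^ m * d N) atTop (nhds 0) := by
    simpa using (tendsto_pow_atTop_nhds_zero_of_lt_one hγ0 hγ1).mul_const (d N)
  obtain ⟨M, hM⟩ := (Metric.tendsto_atTop.mp hpow) (ε / 2) (by positivity)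
  refine ⟨N + M + 1, fun n hn => ?_⟩
  have hm : ∃ m, n = N + m ∧ m ≥ M := ⟨n - N, by omega, by omega⟩
  obtain ⟨m, rfl, hmM⟩ := hm
  have h1 := key m
  have h2 := hM m hmM
  rw [Real.dist_eq, sub_zero] at h2 ⊢
  have h3 : γ ^ m * d N < ε / 2 := lt_of_le_of_lt (le_abs_self _) h2
  rw [abs_of_nonneg (hd0 _)]
  linarith

theorem deviation_tendsto_zero
    {S A : Type*} [Fintype S] [Nonempty S] [Fintype A] [Nonempty A]
    (γ : ℝ) (hγ0 : 0 ≤ γ) (hγ1 : γ < 1)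
    (p : S → A → S → ℝ)
    (hp0 : ∀ s a s', 0 ≤ p s a s') (hp1 : ∀ s a, ∑ s' : S, p s a s' = 1)
    (r : S → A → ℝ) (e : ℕ → S → ℝ) (Q : ℕ → S → A → ℝ) (Qstar : S → A → ℝ)
    (Qbar : ℝ)
    (hstar : ∀ s a, Qstar s a =
      r s a + γ * ∑ s' : S, p s a s' *
        Finset.univ.sup' Finset.univ_nonempty (fun a' => Qstar s' a'))
    (hbar : ∀ s a, |Qstar s a| ≤ Qbar)
    (hQ0 : ∀ s a, Q 0 s a = r s a)
    (hrec : ∀ n s a, Q (n + 1) s a =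
      r s a + γ * ∑ s' : S, p s a s' *
        (Finset.univ.sup' Finset.univ_nonempty (fun a' => Q n s' a') + e n s'))
    (B : ℝ) (hB : ∀ n s, |e n s| ≤ B)
    (he : Filter.Tendsto
      (fun n => Finset.univ.sup' Finset.univ_nonempty (fun s => |e n s|))
      Filter.atTop (nhds 0)) :
    ∀ s a, Filter.Tendsto (fun n => Q n s a - Qstar s a) Filter.atTop (nhds 0) := by
  -- deviation sup over pairs
  set d : ℕ → ℝ := fun n =>
    Finset.univ.sup' Finset.univ_nonempty
      (fun sa : S × A => |Q n sa.1 sa.2 - Qstar sa.1 sa.2|) with hd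
  set ε : ℕ → ℝ := fun n =>
    Finset.univ.sup' Finset.univ_nonempty (fun s => |e n s|) with hεdef
  have hdle : ∀ n s a, |Q n s a - Qstar s a| ≤ d n := fun n s a =>
    Finset.le_sup' (f := fun sa : S × A => |Q n sa.1 sa.2 - Qstar sa.1 sa.2|)
      (Finset.mem_univ (s, a))
  have hεle : ∀ n s, |e n s| ≤ ε n := fun n s =>
    Finset.le_sup' (f := fun s => |e n s|) (Finset.mem_univ s)
  have hd0 : ∀ n, 0 ≤ d n := fun n =>
    le_trans (abs_nonneg _) (hdle n (Classical.arbitrary S) (Classical.arbitrary A))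
  have hrecd : ∀ n, d (n + 1) ≤ γ * d n + γ * ε n := by
    intro n
    apply Finset.sup'_le
    rintro ⟨s, a⟩ -
    simp only
    have hstep : Q (n+1) s a - Qstar s a =
        γ * ∑ s' : S, p s a s' *
          ((Finset.univ.sup' Finset.univ_nonempty (fun a' => Q n s' a') + e n s')
            - Finset.univ.sup' Finset.univ_nonempty (fun a' => Qstar s' a')) := by
      rw [hrec n s a, hstar s a]
      simp only [mul_sub, Finset.sum_sub_distrib]
      ring
    rw [hstep, abs_mul, abs_of_nonneg hγ0]
    have hsum : |∑ s' : S, p s a s' *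
          ((Finset.univ.sup' Finset.univ_nonempty (fun a' => Q n s' a') + e n s')
            - Finset.univ.sup' Finset.univ_nonempty (fun a' => Qstar s' a'))|
        ≤ d n + ε n := by
      calc _ ≤ ∑ s' : S, |p s a s' *
          ((Finset.univ.sup' Finset.univ_nonempty (fun a' => Q n s' a') + e n s')
            - Finset.univ.sup' Finset.univ_nonempty (fun a' => Qstar s' a'))| :=
            Finset.abs_sum_le_sum_abs _ _
        _ ≤ ∑ s' : S, p s a s' * (d n + ε n) := by
            apply Finset.sum_le_sum
            intro s' _
            rw [abs_mul, abs_of_nonneg (hp0 s a s')]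
            apply mul_le_mul_of_nonneg_left _ (hp0 s a s')
            have h1 : |Finset.univ.sup' Finset.univ_nonempty (fun a' => Q n s' a')
                - Finset.univ.sup' Finset.univ_nonempty (fun a' => Qstar s' a')| ≤ d n := by
              apply abs_sup'_sub_sup'_le_aux
              intro a' _
              exact hdle n s' a'
            have h2 := hεle n s'
            have := abs_le.mp h1
            have := abs_le.mp h2
            rw [abs_le]
            constructor <;> linarith
        _ = d n + ε n := by rw [← Finset.sum_mul, hp1, one_mul]
    calc γ * |_| ≤ γ * (d n + ε n) := mul_le_mul_of_nonneg_left hsum hγ0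
      _ = γ * d n + γ * ε n := by ring
  have hc : Tendsto (fun n => γ * ε n) atTop (nhds 0) := by
    simpa using he.const_mul γ
  have hdlim : Tendsto d atTop (nhds 0) :=
    tendsto_of_rec_le hγ0 hγ1 d (fun n => γ * ε n) hd0 hrecd hc
  intro s a
  have h1 : ∀ n, -(d n) ≤ Q n s a - Qstar s a := fun n =>
    le_trans (neg_le_neg (hdle n s a)) (neg_abs_le _)
  have h2 : ∀ n, Q n s a - Qstar s a ≤ d n := fun n =>
    le_of_abs_le (hdle n s a)
  refine tendsto_of_tendsto_of_tendsto_of_le_of_le (g := fun n => -(d n)) (h := d)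
    ?_ hdlim h1 h2
  simpa using hdlim.neg
end

section
/- If the errors satisfy: for every ε > 0 there exists N such that −τ·log|A| − ε ≤ e_n(s) ≤ ε for all s and n ≥ N (and the e_n are bounded), then in the value-iteration error recursion: −τ·log|A|·γ/(1−γ) ≤ liminf_n δQ_n(s,a) ≤ limsup_n δQ_n(s,a) ≤ 0 for all (s,a). -/
open Finset Filter

theorem deviation_liminf_limsup_bounds
    {S A : Type*} [Fintype S] [Nonempty S] [Fintype A] [Nonempty A]
    (γ : ℝ) (hγ0 : 0 ≤ γ) (hγ1 : γ < 1) (τ : ℝ) (hτ : 0 < τ)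
    (p : S → A → S → ℝ)
    (hp0 : ∀ s a s', 0 ≤ p s a s') (hp1 : ∀ s a, ∑ s' : S, p s a s' = 1)
    (r : S → A → ℝ) (e : ℕ → S → ℝ) (Q : ℕ → S → A → ℝ) (Qstar : S → A → ℝ)
    (Qbar : ℝ)
    (hstar : ∀ s a, Qstar s a =
      r s a + γ * ∑ s' : S, p s a s' *
        Finset.univ.sup' Finset.univ_nonempty (fun a' => Qstar s' a'))
    (hbar : ∀ s a, |Qstar s a| ≤ Qbar)
    (hQ0 : ∀ s a, Q 0 s a = r s a)
    (hrec : ∀ n s a, Q (n + 1) s a =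
      r s a + γ * ∑ s' : S, p s a s' *
        (Finset.univ.sup' Finset.univ_nonempty (fun a' => Q n s' a') + e n s'))
    (B : ℝ) (hB : ∀ n s, |e n s| ≤ B)
    (he : ∀ ε : ℝ, 0 < ε → ∃ N : ℕ, ∀ n, N ≤ n → ∀ s,
      -τ * Real.log (Fintype.card A) - ε ≤ e n s ∧ e n s ≤ ε) :
    ∀ s a,
      -τ * Real.log (Fintype.card A) * γ / (1 - γ) ≤
          Filter.liminf (fun n => Q n s a - Qstar s a) Filter.atTop ∧
        Filter.liminf (fun n => Q n s a - Qstar s a) Filter.atTop ≤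
          Filter.limsup (fun n => Q n s a - Qstar s a) Filter.atTop ∧
        Filter.limsup (fun n => Q n s a - Qstar s a) Filter.atTop ≤ 0 := by
  have h1γ : (0:ℝ) < 1 - γ := by linarith
  have hA1 : (1:ℝ) ≤ (Fintype.card A : ℝ) := by exact_mod_cast Fintype.card_pos
  set L : ℝ := τ * Real.log (Fintype.card A) with hLdef
  have hL0 : 0 ≤ L := mul_nonneg hτ.le (Real.log_nonneg hA1)
  have hQbar : 0 ≤ Qbar :=
    le_trans (abs_nonneg _) (hbar (Classical.arbitrary S) (Classical.arbitrary A))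
  have hB0 : 0 ≤ B := le_trans (abs_nonneg _) (hB 0 (Classical.arbitrary S))
  have hneg : ∀ x : ℝ, -τ * Real.log (Fintype.card A) - x = -(L + x) := by
    intro x; rw [hLdef]; ring
  -- the key recursion for the deviation
  have hdev : ∀ n s a, Q (n+1) s a - Qstar s a =
      γ * ∑ s' : S, p s a s' *
        ((Finset.univ.sup' Finset.univ_nonempty (fun a' => Q n s' a') + e n s')
          - Finset.univ.sup' Finset.univ_nonempty (fun a' => Qstar s' a')) := by
    intro n s a
    rw [hrec, hstar]
    have : ∀ (c d : S → ℝ),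
        (r s a + γ * ∑ s' : S, p s a s' * c s') - (r s a + γ * ∑ s' : S, p s a s' * d s')
          = γ * ∑ s' : S, p s a s' * (c s' - d s') := by
      intro c d
      have hs : ∑ s' : S, p s a s' * (c s' - d s')
          = (∑ s' : S, p s a s' * c s') - ∑ s' : S, p s a s' * d s' := by
        rw [← Finset.sum_sub_distrib]
        exact Finset.sum_congr rfl fun s' _ => by ring
      rw [hs]; ring
    exact this _ _
  -- convex-combination bounds
  have hconv_up : ∀ s a (c : S → ℝ) (M : ℝ), (∀ s', c s' ≤ M) →
      ∑ s' : S, p s a s' * c s' ≤ M := by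
    intro s a c M hc
    calc ∑ s' : S, p s a s' * c s' ≤ ∑ s' : S, p s a s' * M :=
          Finset.sum_le_sum (fun s' _ => mul_le_mul_of_nonneg_left (hc s') (hp0 s a s'))
      _ = M := by rw [← Finset.sum_mul, hp1, one_mul]
  have hconv_down : ∀ s a (c : S → ℝ) (M : ℝ), (∀ s', M ≤ c s') →
      M ≤ ∑ s' : S, p s a s' * c s' := by
    intro s a c M hc
    calc M = ∑ s' : S, p s a s' * M := by rw [← Finset.sum_mul, hp1, one_mul]
      _ ≤ ∑ s' : S, p s a s' * c s' :=
          Finset.sum_le_sum (fun s' _ => mul_le_mul_of_nonneg_left (hc s') (hp0 s a s'))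
  -- comparison of sup's
  have hsup_le : ∀ (f g : A → ℝ) (M : ℝ), (∀ a', f a' - g a' ≤ M) →
      Finset.univ.sup' Finset.univ_nonempty f - Finset.univ.sup' Finset.univ_nonempty g ≤ M := by
    intro f g M hfg
    rw [sub_le_iff_le_add]
    apply Finset.sup'_le
    intro a' _
    have h1 := Finset.le_sup' g (Finset.mem_univ a')
    have h2 := hfg a'
    linarith
  -- one-step bounds
  have step_up : ∀ n (M ε : ℝ), (∀ s' a', Q n s' a' - Qstar s' a' ≤ M) →
      (∀ s', e n s' ≤ ε) → ∀ s a, Q (n+1) s a - Qstar s a ≤ γ * (M + ε) := by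
    intro n M ε hM hε s a
    rw [hdev]
    apply mul_le_mul_of_nonneg_left _ hγ0
    apply hconv_up
    intro s'
    have h1 := hsup_le (fun a' => Q n s' a') (fun a' => Qstar s' a') M (fun a' => hM s' a')
    have h2 := hε s'
    linarith
  have step_down : ∀ n (M ε : ℝ), (∀ s' a', -M ≤ Q n s' a' - Qstar s' a') →
      (∀ s', -ε ≤ e n s') → ∀ s a, -(γ * (M + ε)) ≤ Q (n+1) s a - Qstar s a := by
    intro n M ε hM hε s a
    have hrw : -(γ * (M + ε)) = γ * (-(M + ε)) := by ring
    rw [hdev, hrw]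
    apply mul_le_mul_of_nonneg_left _ hγ0
    apply hconv_down
    intro s'
    have h1 := hsup_le (fun a' => Qstar s' a') (fun a' => Q n s' a') M
      (fun a' => by have := hM s' a'; linarith)
    have h2 := hε s'
    linarith
  -- global bound
  set C : ℝ := Qbar + B / (1 - γ) with hCdef
  have hC0 : 0 ≤ C := add_nonneg hQbar (div_nonneg hB0 h1γ.le)
  have hCstep : γ * (C + B) ≤ C := by
    have key : C - γ * (C + B) = (1 - γ) * Qbar + (1 - γ) * B := by
      rw [hCdef]; field_simp; ring
    nlinarith [mul_nonneg h1γ.le hQbar, mul_nonneg h1γ.le hB0]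
  have hsupstar_ub : ∀ s',
      Finset.univ.sup' Finset.univ_nonempty (fun a' => Qstar s' a') ≤ Qbar :=
    fun s' => Finset.sup'_le _ _ (fun a' _ => (abs_le.mp (hbar s' a')).2)
  have hsupstar_lb : ∀ s',
      -Qbar ≤ Finset.univ.sup' Finset.univ_nonempty (fun a' => Qstar s' a') :=
    fun s' => le_trans (abs_le.mp (hbar s' (Classical.arbitrary A))).1
      (Finset.le_sup' _ (Finset.mem_univ _))
  have hglob : ∀ n s a, -C ≤ Q n s a - Qstar s a ∧ Q n s a - Qstar s a ≤ C := by
    intro n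
    induction n with
    | zero =>
      intro s a
      have hd0 : Q 0 s a - Qstar s a
          = -(γ * ∑ s' : S, p s a s' *
              Finset.univ.sup' Finset.univ_nonempty (fun a' => Qstar s' a')) := by
        rw [hQ0]; linarith [hstar s a]
      have h1 := hconv_up s a _ Qbar hsupstar_ub
      have h2 := hconv_down s a _ (-Qbar) hsupstar_lb
      have h3 := mul_le_mul_of_nonneg_left h1 hγ0
      have h4 := mul_le_mul_of_nonneg_left h2 hγ0
      have h5 : γ * Qbar ≤ Qbar := by nlinarith
      have h6 : Qbar ≤ C := by
        rw [hCdef]; have := div_nonneg hB0 h1γ.le; linarith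
      constructor <;> [skip; skip] <;> rw [hd0] <;> nlinarith
    | succ n ih =>
      intro s a
      have hup := step_up n C B (fun s' a' => (ih s' a').2)
        (fun s' => (abs_le.mp (hB n s')).2) s a
      have hdn := step_down n C B (fun s' a' => (ih s' a').1)
        (fun s' => (abs_le.mp (hB n s')).1) s a
      exact ⟨by linarith, by linarith⟩
  -- geometric decay bounds
  have hgeom_up : ∀ (N : ℕ) (ε : ℝ), 0 ≤ ε → (∀ n, N ≤ n → ∀ s', e n s' ≤ ε) →
      ∀ k s a, Q (N + k) s a - Qstar s a ≤ γ ^ k * C + γ * ε / (1 - γ) := by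
    intro N ε hε hee k
    induction k with
    | zero =>
      intro s a
      have h1 : 0 ≤ γ * ε / (1 - γ) := div_nonneg (mul_nonneg hγ0 hε) h1γ.le
      have h2 := (hglob N s a).2
      simp only [Nat.add_zero, pow_zero, one_mul]
      exact le_add_of_le_of_nonneg h2 h1
    | succ k ih =>
      intro s a
      have h := step_up (N + k) (γ ^ k * C + γ * ε / (1 - γ)) ε ih
        (hee (N + k) (Nat.le_add_right N k)) s a
      have heq : γ * ((γ ^ k * C + γ * ε / (1 - γ)) + ε)
          = γ ^ (k + 1) * C + γ * ε / (1 - γ) := by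
        field_simp; ring
      have hidx : N + (k + 1) = (N + k) + 1 := rfl
      rw [hidx]
      linarith
  have hgeom_down : ∀ (N : ℕ) (ε : ℝ), 0 ≤ ε → (∀ n, N ≤ n → ∀ s', -ε ≤ e n s') →
      ∀ k s a, -(γ ^ k * C + γ * ε / (1 - γ)) ≤ Q (N + k) s a - Qstar s a := by
    intro N ε hε hee k
    induction k with
    | zero =>
      intro s a
      have h1 : 0 ≤ γ * ε / (1 - γ) := div_nonneg (mul_nonneg hγ0 hε) h1γ.le
      have h2 := (hglob N s a).1
      simp only [Nat.add_zero, pow_zero, one_mul]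
      exact le_trans (neg_le_neg (le_add_of_le_of_nonneg le_rfl h1)) h2
    | succ k ih =>
      intro s a
      have h := step_down (N + k) (γ ^ k * C + γ * ε / (1 - γ)) ε ih
        (hee (N + k) (Nat.le_add_right N k)) s a
      have heq : γ * ((γ ^ k * C + γ * ε / (1 - γ)) + ε)
          = γ ^ (k + 1) * C + γ * ε / (1 - γ) := by
        field_simp; ring
      have hidx : N + (k + 1) = (N + k) + 1 := rfl
      rw [hidx]
      linarith
  -- γ^k * C gets small
  have hsmall : ∀ c : ℝ, 0 < c → ∃ k0 : ℕ, γ ^ k0 * C ≤ c / 2 := by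
    intro c hc
    have ht : Tendsto (fun k : ℕ => γ ^ k * C) atTop (nhds 0) := by
      simpa using (tendsto_pow_atTop_nhds_zero_of_lt_one hγ0 hγ1).mul_const C
    have := (ht.eventually_lt_const (half_pos hc)).exists
    obtain ⟨k0, hk0⟩ := this
    exact ⟨k0, hk0.le⟩
  intro s a
  set u : ℕ → ℝ := fun n => Q n s a - Qstar s a with hu
  have hbdd_le : IsBoundedUnder (· ≤ ·) atTop u :=
    isBoundedUnder_of ⟨C, fun n => (hglob n s a).2⟩
  have hbdd_ge : IsBoundedUnder (· ≥ ·) atTop u :=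
    isBoundedUnder_of ⟨-C, fun n => (hglob n s a).1⟩
  -- eventual upper bound
  have hev_up : ∀ c : ℝ, 0 < c → ∀ᶠ n in atTop, u n ≤ c := by
    intro c hc
    obtain ⟨N, hN⟩ := he (c * (1 - γ) / 2) (by positivity)
    obtain ⟨k0, hk0⟩ := hsmall c hc
    have hgε : γ * (c * (1 - γ) / 2) / (1 - γ) ≤ c / 2 := by
      have hEq : γ * (c * (1 - γ) / 2) / (1 - γ) = γ * c / 2 := by field_simp
      rw [hEq]; nlinarith
    refine Filter.eventually_atTop.mpr ⟨N + k0, ?_⟩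
    intro n hn
    have hkn : n = N + (n - N) := by omega
    have h1 := hgeom_up N (c * (1 - γ) / 2) (by positivity)
      (fun m hm s' => (hN m hm s').2) (n - N) s a
    rw [← hkn] at h1
    have h2 : γ ^ (n - N) * C ≤ γ ^ k0 * C :=
      mul_le_mul_of_nonneg_right (pow_le_pow_of_le_one hγ0 hγ1.le (by omega)) hC0
    calc Q n s a - Qstar s a
        ≤ γ ^ (n - N) * C + γ * (c * (1 - γ) / 2) / (1 - γ) := h1
      _ ≤ c / 2 + c / 2 := add_le_add (h2.trans hk0) hgε
      _ = c := by ring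
  -- eventual lower bound
  have hev_down : ∀ c : ℝ, 0 < c → ∀ᶠ n in atTop, -(L * γ / (1 - γ)) - c ≤ u n := by
    intro c hc
    obtain ⟨N, hN⟩ := he (c * (1 - γ) / 2) (by positivity)
    obtain ⟨k0, hk0⟩ := hsmall c hc
    have hε0 : (0:ℝ) ≤ L + c * (1 - γ) / 2 := by positivity
    have hNe : ∀ m, N ≤ m → ∀ s', -(L + c * (1 - γ) / 2) ≤ e m s' := by
      intro m hm s'
      have := (hN m hm s').1
      rw [hneg] at this
      exact this
    have hgε : γ * (L + c * (1 - γ) / 2) / (1 - γ) ≤ L * γ / (1 - γ) + c / 2 := by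
      have hEq : γ * (L + c * (1 - γ) / 2) / (1 - γ)
          = L * γ / (1 - γ) + γ * c / 2 := by field_simp
      rw [hEq]; nlinarith
    refine Filter.eventually_atTop.mpr ⟨N + k0, ?_⟩
    intro n hn
    have hkn : n = N + (n - N) := by omega
    have h1 := hgeom_down N (L + c * (1 - γ) / 2) hε0 hNe (n - N) s a
    rw [← hkn] at h1
    have h2 : γ ^ (n - N) * C ≤ γ ^ k0 * C :=
      mul_le_mul_of_nonneg_right (pow_le_pow_of_le_one hγ0 hγ1.le (by omega)) hC0
    calc -(L * γ / (1 - γ)) - c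
        = -(c / 2 + (L * γ / (1 - γ) + c / 2)) := by ring
      _ ≤ -(γ ^ (n - N) * C + γ * (L + c * (1 - γ) / 2) / (1 - γ)) := by
          exact neg_le_neg (add_le_add (h2.trans hk0) hgε)
      _ ≤ Q n s a - Qstar s a := h1
  have hTgoal : -τ * Real.log (Fintype.card A) * γ / (1 - γ) = -(L * γ / (1 - γ)) := by
    rw [hLdef]; ring
  refine ⟨?_, ?_, ?_⟩
  · rw [hTgoal]
    by_contra hcon
    push_neg at hcon
    set ℓ := liminf u atTop with hℓ
    have hc : 0 < (-(L * γ / (1 - γ)) - ℓ) / 2 := by linarith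
    have := le_liminf_of_le hbdd_le.isCoboundedUnder_ge (hev_down _ hc)
    rw [← hℓ] at this
    linarith
  · exact liminf_le_limsup hbdd_le hbdd_ge
  · by_contra hcon
    push_neg at hcon
    set ℓ := limsup u atTop with hℓ
    have hc : 0 < ℓ / 2 := by linarith
    have := limsup_le_of_le hbdd_ge.isCoboundedUnder_le (hev_up _ hc)
    rw [← hℓ] at this
    linarith
end

section
/- An irreducible aperiodic Markov chain on a finite state space has a unique stationary distribution, so the Gibbs distribution μ(a) ∝ exp(Q(a)/τ) is the unique stationary distribution of the single-coordinate softmax-update chain. -/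
open Real Finset

/-- Transition kernel of the single-coordinate softmax-update (log-linear
learning) Markov chain. -/
noncomputable def logLinearKernel {n : ℕ} (Act : Fin n → Type*)
    [∀ i, Fintype (Act i)] [∀ i, DecidableEq (Act i)]
    (Q : (∀ i, Act i) → ℝ) (τ : ℝ) :
    (∀ i, Act i) → (∀ i, Act i) → ℝ := fun a a' =>
  ∑ i : Fin n,
    if ∀ j, j ≠ i → a' j = a j then
      (1 / (n : ℝ)) * Real.exp (Q a' / τ) /
        ∑ b : Act i, Real.exp (Q (Function.update a i b) / τ)
    else 0

section Aux

variable {n : ℕ} {Act : Fin n → Type*}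
    [∀ i, Fintype (Act i)] [∀ i, Nonempty (Act i)] [∀ i, DecidableEq (Act i)]
    (Q : (∀ i, Act i) → ℝ) (τ : ℝ)

local notation "K" => logLinearKernel Act Q τ

lemma Zpos (a : ∀ i, Act i) (i : Fin n) :
    0 < ∑ b : Act i, Real.exp (Q (Function.update a i b) / τ) :=
  Finset.sum_pos (fun b _ => Real.exp_pos _) Finset.univ_nonempty

lemma Knonneg (a a' : ∀ i, Act i) : 0 ≤ K a a' := by
  apply Finset.sum_nonneg
  intro i _
  split
  · have := Zpos Q τ a i
    positivity
  · exact le_refl 0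

lemma Zinv (a a' : ∀ i, Act i) (i : Fin n) (h : ∀ j, j ≠ i → a' j = a j) :
    (∑ b : Act i, Real.exp (Q (Function.update a i b) / τ)) =
    ∑ b : Act i, Real.exp (Q (Function.update a' i b) / τ) := by
  apply Finset.sum_congr rfl
  intro b _
  have he : Function.update a i b = Function.update a' i b := by
    funext j
    by_cases hj : j = i
    · subst hj; simp
    · simp [Function.update_of_ne hj, h j hj]
  rw [he]

lemma balance (a a' : ∀ i, Act i) :
    Real.exp (Q a / τ) * K a a' = Real.exp (Q a' / τ) * K a' a := by
  unfold logLinearKernel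
  rw [Finset.mul_sum, Finset.mul_sum]
  apply Finset.sum_congr rfl
  intro i _
  by_cases h : ∀ j, j ≠ i → a' j = a j
  · have h' : ∀ j, j ≠ i → a j = a' j := fun j hj => (h j hj).symm
    rw [if_pos h, if_pos h', Zinv Q τ a a' i h]
    ring
  · have h' : ¬ ∀ j, j ≠ i → a j = a' j := fun hc => h (fun j hj => (hc j hj).symm)
    rw [if_neg h, if_neg h']
    ring

lemma rowsum (hn : 1 ≤ n) (a : ∀ i, Act i) : ∑ a' : ∀ i, Act i, K a a' = 1 := by
  unfold logLinearKernel
  rw [Finset.sum_comm]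
  have : ∀ i : Fin n,
      (∑ a' : ∀ j, Act j, if ∀ j, j ≠ i → a' j = a j then
        (1 / (n : ℝ)) * Real.exp (Q a' / τ) /
          ∑ b : Act i, Real.exp (Q (Function.update a i b) / τ) else 0)
      = 1 / (n : ℝ) := by
    intro i
    rw [← Finset.sum_filter]
    have himg : (Finset.univ.filter (fun a' : ∀ j, Act j => ∀ j, j ≠ i → a' j = a j))
        = Finset.univ.image (fun b : Act i => Function.update a i b) := by
      ext a'
      simp only [Finset.mem_filter, Finset.mem_image, Finset.mem_univ, true_and]
      constructor
      · intro h
        exact ⟨a' i, by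
          funext j
          by_cases hj : j = i
          · subst hj; simp
          · simp [Function.update_of_ne hj, h j hj]⟩
      · rintro ⟨b, rfl⟩ j hj
        simp [Function.update_of_ne hj]
    rw [himg, Finset.sum_image]
    · have hZ := Zpos Q τ a i
      rw [← Finset.sum_div, ← Finset.mul_sum, mul_div_assoc,
        div_self (ne_of_gt hZ), mul_one]
    · intro b _ c _ h
      have := congrFun h i
      simpa using this
  rw [Finset.sum_congr rfl (fun i _ => this i)]
  simp
  field_simp

lemma Kpos (hn : 1 ≤ n) (a a' : ∀ i, Act i) (i : Fin n)
    (h : ∀ j, j ≠ i → a' j = a j) : 0 < K a a' := by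
  have hterm : (0:ℝ) < if ∀ j, j ≠ i → a' j = a j then
      (1 / (n : ℝ)) * Real.exp (Q a' / τ) /
        ∑ b : Act i, Real.exp (Q (Function.update a i b) / τ) else 0 := by
    rw [if_pos h]
    have hZ := Zpos Q τ a i
    have hn' : (0:ℝ) < n := by exact_mod_cast hn
    positivity
  apply Finset.sum_pos'
  · intro j _
    split
    · have := Zpos Q τ a j
      have hn' : (0:ℝ) < n := by exact_mod_cast hn
      positivity
    · exact le_refl 0
  · exact ⟨i, Finset.mem_univ i, hterm⟩

end Aux

theorem gibbs_unique_stationary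
    {n : ℕ} (hn : 1 ≤ n) (Act : Fin n → Type*)
    [∀ i, Fintype (Act i)] [∀ i, Nonempty (Act i)] [∀ i, DecidableEq (Act i)]
    (Q : (∀ i, Act i) → ℝ) (τ : ℝ) (hτ : 0 < τ)
    (μ : (∀ i, Act i) → ℝ)
    (hμ : ∀ a, μ a = Real.exp (Q a / τ) / ∑ b : ∀ i, Act i, Real.exp (Q b / τ)) :
    (∀ a' : ∀ i, Act i,
      ∑ a : ∀ i, Act i, μ a * logLinearKernel Act Q τ a a' = μ a') ∧
    (∀ ν : (∀ i, Act i) → ℝ, (∀ a, 0 ≤ ν a) → (∑ a : ∀ i, Act i, ν a = 1) →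
      (∀ a' : ∀ i, Act i,
        ∑ a : ∀ i, Act i, ν a * logLinearKernel Act Q τ a a' = ν a') →
      ν = μ) := by
  have hZtot : (0:ℝ) < ∑ b : (∀ i, Act i), Real.exp (Q b / τ) :=
    Finset.sum_pos (fun b _ => Real.exp_pos _) Finset.univ_nonempty
  have hμpos : ∀ a : (∀ i, Act i), 0 < μ a := by
    intro a; rw [hμ a]; positivity
  have hμbal : ∀ a a' : (∀ i, Act i),
      μ a * logLinearKernel Act Q τ a a' = μ a' * logLinearKernel Act Q τ a' a := by
    intro a a'
    rw [hμ a, hμ a', div_mul_eq_mul_div, div_mul_eq_mul_div, balance]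
  have hstat : ∀ a' : (∀ i, Act i),
      ∑ a : (∀ i, Act i), μ a * logLinearKernel Act Q τ a a' = μ a' := by
    intro a'
    calc ∑ a : (∀ i, Act i), μ a * logLinearKernel Act Q τ a a'
        = ∑ a : (∀ i, Act i), μ a' * logLinearKernel Act Q τ a' a :=
          Finset.sum_congr rfl (fun a _ => hμbal a a')
      _ = μ a' * ∑ a : (∀ i, Act i), logLinearKernel Act Q τ a' a := by rw [Finset.mul_sum]
      _ = μ a' := by rw [rowsum Q τ hn a', mul_one]
  refine ⟨hstat, ?_⟩
  intro ν hν0 hν1 hνstat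
  have hμsum : ∑ a : (∀ i, Act i), μ a = 1 := by
    rw [Finset.sum_congr rfl (fun a _ => hμ a), ← Finset.sum_div,
      div_self (ne_of_gt hZtot)]
  set f : (∀ i, Act i) → ℝ := fun a => ν a / μ a with hf
  have hfmul : ∀ a : (∀ i, Act i), f a * μ a = ν a := fun a =>
    div_mul_cancel₀ _ (ne_of_gt (hμpos a))
  -- harmonicity of f
  have hharm : ∀ a' : (∀ i, Act i), ∑ a : (∀ i, Act i), logLinearKernel Act Q τ a' a * f a = f a' := by
    intro a'
    have h1 : ∑ a : (∀ i, Act i), ν a * logLinearKernel Act Q τ a a' = ν a' := hνstat a'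
    have h2 : ∀ a : (∀ i, Act i), ν a * logLinearKernel Act Q τ a a'
        = μ a' * (logLinearKernel Act Q τ a' a * f a) := by
      intro a
      rw [← hfmul a]
      calc f a * μ a * logLinearKernel Act Q τ a a'
          = f a * (μ a * logLinearKernel Act Q τ a a') := by ring
        _ = f a * (μ a' * logLinearKernel Act Q τ a' a) := by rw [hμbal]
        _ = μ a' * (logLinearKernel Act Q τ a' a * f a) := by ring
    rw [Finset.sum_congr rfl (fun a _ => h2 a), ← Finset.mul_sum] at h1
    have := h1
    rw [← hfmul a'] at this
    have hμne := ne_of_gt (hμpos a')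
    exact mul_left_cancel₀ hμne (this.trans (mul_comm _ _))
  -- maximum of f
  obtain ⟨astar, _, hmax⟩ := Finset.exists_max_image (Finset.univ : Finset (∀ i, Act i))
    f Finset.univ_nonempty
  set M := f astar with hM
  have hle : ∀ a : (∀ i, Act i), f a ≤ M := fun a => hmax a (Finset.mem_univ a)
  -- max principle step
  have hstep : ∀ b c : (∀ i, Act i), f b = M → 0 < logLinearKernel Act Q τ b c → f c = M := by
    intro b c hb hKbc
    have hsum0 : ∑ a : (∀ i, Act i), logLinearKernel Act Q τ b a * (M - f a) = 0 := by
      have : ∑ a : (∀ i, Act i), logLinearKernel Act Q τ b a * (M - f a)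
          = M * (∑ a : (∀ i, Act i), logLinearKernel Act Q τ b a)
            - ∑ a : (∀ i, Act i), logLinearKernel Act Q τ b a * f a := by
        rw [Finset.mul_sum, ← Finset.sum_sub_distrib]
        exact Finset.sum_congr rfl (fun a _ => by ring)
      rw [this, rowsum Q τ hn b, hharm b, hb, mul_one, sub_self]
    have hnn : ∀ a ∈ (Finset.univ : Finset (∀ i, Act i)),
        0 ≤ logLinearKernel Act Q τ b a * (M - f a) := by
      intro a _
      exact mul_nonneg (Knonneg Q τ b a) (sub_nonneg.mpr (hle a))
    have hz := (Finset.sum_eq_zero_iff_of_nonneg hnn).mp hsum0 c (Finset.mem_univ c)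
    rcases mul_eq_zero.mp hz with h | h
    · exact absurd h (ne_of_gt hKbc)
    · linarith [sub_eq_zero.mp h]
  -- connectivity: f is constantly M
  have hconst : ∀ s : Finset (Fin n), ∀ a : (∀ i, Act i), (∀ j, j ∉ s → a j = astar j) → f a = M := by
    intro s
    induction s using Finset.induction_on with
    | empty =>
      intro a ha
      have : a = astar := funext (fun j => ha j (Finset.notMem_empty j))
      rw [this]
    | insert i s' hi ih =>
      intro a ha
      set a'' : (∀ i, Act i) := Function.update a i (astar i) with ha''
      have h1 : ∀ j, j ∉ s' → a'' j = astar j := by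
        intro j hj
        by_cases hji : j = i
        · subst hji; simp [ha'']
        · rw [ha'', Function.update_of_ne hji]
          exact ha j (by simp [hji, hj])
      have hfa'' : f a'' = M := ih a'' h1
      have hcond : ∀ j, j ≠ i → a j = a'' j := by
        intro j hj
        rw [ha'', Function.update_of_ne hj]
      exact hstep a'' a hfa'' (Kpos Q τ hn a'' a i hcond)
  have hfM : ∀ a : (∀ i, Act i), f a = M := fun a =>
    hconst Finset.univ a (fun j hj => absurd (Finset.mem_univ j) hj)
  have hM1 : M = 1 := by
    have : ∑ a : (∀ i, Act i), ν a = ∑ a : (∀ i, Act i), M * μ a := by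
      apply Finset.sum_congr rfl
      intro a _
      rw [← hfmul a, hfM a]
    rw [hν1, ← Finset.mul_sum, hμsum, mul_one] at this
    exact this.symm
  funext a
  rw [← hfmul a, hfM a, hM1, one_mul]
end
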